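/- arXiv:2601.07326 — 3 statements merged into one kernel-verified Lean document; each statement's English description precedes it below -/
import Mathlib

section
/- Let X be a random symmetric positive semidefinite m×m matrix and t ∈ [0,1]. Then E[X^t] ⪯ (E[X])^t, i.e., the matrix power function with exponent in [0,1] is operator concave in expectation. -/
/-!
For `t ∈ [0, 1]` the map `A ↦ A ^ t` is operator concave on positive semidefinite matrices
(Löwner–Heinz). Composed with the positive functional `A ↦ xᵀ A x` it becomes a scalar function
that is concave and continuous on the closed cone of positive semidefinite matrices, so Jensen's
inequality gives `E[xᵀ X^t x] ≤ xᵀ (E X)^t x` for every vector `x`, which is the claim.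
-/

open Matrix BigOperators

noncomputable section

namespace Paper

/-- Matrix real power of a symmetric matrix via spectral decomposition
(junk value `0` if the matrix is not hermitian). -/
def mrpow {m : ℕ} (X : Matrix (Fin m) (Fin m) ℝ) (t : ℝ) : Matrix (Fin m) (Fin m) ℝ :=
  if h : X.IsHermitian then
    (Matrix.IsHermitian.eigenvectorUnitary h : Matrix (Fin m) (Fin m) ℝ) *
      Matrix.diagonal (fun i => (h.eigenvalues i) ^ t) *
      star (Matrix.IsHermitian.eigenvectorUnitary h : Matrix (Fin m) (Fin m) ℝ)
  else 0

/-- Singular values of a rectangular real matrix, as the square roots of the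
eigenvalues of `Aᴴ * A` (listed with multiplicity, indexed by `Fin n`). -/
def singVals {m n : ℕ} (A : Matrix (Fin m) (Fin n) ℝ) : Fin n → ℝ :=
  fun i => Real.sqrt ((Matrix.isHermitian_conjTranspose_mul_self A).eigenvalues i)

/-- Nuclear norm: sum of singular values. -/
def nuclearNorm {m n : ℕ} (A : Matrix (Fin m) (Fin n) ℝ) : ℝ :=
  ∑ i, singVals A i

/-- Frobenius norm. -/
def frobNorm {m n : ℕ} (A : Matrix (Fin m) (Fin n) ℝ) : ℝ :=
  Real.sqrt ((Aᴴ * A).trace)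

/-- Spectral norm: largest singular value. -/
def opNorm {m n : ℕ} (A : Matrix (Fin m) (Fin n) ℝ) : ℝ :=
  ⨆ i, singVals A i

/-- Schatten-`p` norm for finite `p`. -/
def schattenNorm {m n : ℕ} (p : ℝ) (A : Matrix (Fin m) (Fin n) ℝ) : ℝ :=
  (∑ i, (singVals A i) ^ p) ^ (1 / p)

end Paper

open Set MeasureTheory

theorem ConcaveOn.linearMap_comp {𝕜 E β γ : Type*} [Semiring 𝕜] [PartialOrder 𝕜]
    [AddCommMonoid E] [AddCommMonoid β] [PartialOrder β] [AddCommMonoid γ] [PartialOrder γ]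
    [Module 𝕜 E] [Module 𝕜 β] [Module 𝕜 γ] {s : Set E} {f : E → β} (hf : ConcaveOn 𝕜 s f)
    (ℓ : β →ₗ[𝕜] γ) (hℓ : Monotone ℓ) : ConcaveOn 𝕜 s (ℓ ∘ f) :=
  ⟨hf.1, fun a ha b hb r s hr hs hrs => by
    simpa only [Function.comp_apply, map_add, map_smul] using hℓ (hf.2 ha hb hr hs hrs)⟩

namespace CFC

variable {A : Type*} [CStarAlgebra A] [PartialOrder A] [StarOrderedRing A]

theorem continuousOn_rpow_Ici {p : ℝ} (hp : 0 ≤ p) :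
    ContinuousOn (fun a : A => a ^ p) (Ici 0) := by
  rcases hp.eq_or_lt with rfl | hp
  · exact continuousOn_const.congr rpow_zero_eqOn
  · lift p to NNReal using hp.le
    exact (continuousOn_nnrpow p).congr fun a _ => (nnrpow_eq_rpow (by exact_mod_cast hp)).symm

theorem integral_map_rpow_le {Ω : Type*} [MeasurableSpace Ω] {μ : Measure Ω}
    [IsProbabilityMeasure μ] {p : ℝ} (hp : p ∈ Icc 0 1) (ℓ : A →L[ℝ] ℝ) (hℓ : Monotone ℓ)
    {f : Ω → A} (hf₀ : ∀ᵐ ω ∂μ, 0 ≤ f ω) (hf : Integrable f μ)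
    (hℓf : Integrable (fun ω => ℓ (f ω ^ p)) μ) :
    ∫ ω, ℓ (f ω ^ p) ∂μ ≤ ℓ ((∫ ω, f ω ∂μ) ^ p) :=
  ((concaveOn_rpow hp).linearMap_comp ℓ.toLinearMap hℓ).le_map_integral
    (ℓ.continuous.comp_continuousOn (continuousOn_rpow_Ici hp.1)) isClosed_Ici hf₀ hf hℓf

end CFC

theorem linearMap_apply_eq_sum_single {R m n E : Type*} [Semiring R] [Fintype m] [Fintype n]
    [DecidableEq m] [DecidableEq n] [AddCommMonoid E] [Module R E] (L : Matrix m n R →ₗ[R] E)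
    (A : Matrix m n R) : L A = ∑ i, ∑ j, A i j • L (single i j 1) := by
  conv_lhs => rw [matrix_eq_sum_single A]
  simp [map_sum, ← map_smul, smul_single]

section EntrywiseIntegral

variable {m n : Type*} [Fintype m] [Fintype n] [DecidableEq m] [DecidableEq n]
  {E : Type*} [NormedAddCommGroup E] [NormedSpace ℝ E]
  {Ω : Type*} [MeasurableSpace Ω] {μ : Measure Ω} {M : Ω → Matrix m n ℝ}

theorem integrable_linearMap_comp (L : Matrix m n ℝ →ₗ[ℝ] E)
    (hM : ∀ i j, Integrable (fun ω => M ω i j) μ) : Integrable (fun ω => L (M ω)) μ := by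
  rw [funext fun ω => linearMap_apply_eq_sum_single L (M ω)]
  exact integrable_finsetSum _ fun i _ => integrable_finsetSum _ fun j _ =>
    (hM i j).smul_const _

theorem integral_linearMap_comp [CompleteSpace E] (L : Matrix m n ℝ →ₗ[ℝ] E)
    (hM : ∀ i j, Integrable (fun ω => M ω i j) μ) :
    ∫ ω, L (M ω) ∂μ = L (of fun i j => ∫ ω, M ω i j ∂μ) := by
  rw [funext fun ω => linearMap_apply_eq_sum_single L (M ω), linearMap_apply_eq_sum_single L,
    integral_finsetSum _ fun i _ => integrable_finsetSum _ fun j _ => (hM i j).smul_const _]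
  refine Finset.sum_congr rfl fun i _ => ?_
  rw [integral_finsetSum _ fun j _ => (hM i j).smul_const _]
  exact Finset.sum_congr rfl fun j _ => integral_smul_const _ _

end EntrywiseIntegral

namespace Paper

theorem isHermitian_of_integral {n Ω : Type*} [MeasurableSpace Ω] {μ : Measure Ω}
    {M : Ω → Matrix n n ℝ} (hM : ∀ᵐ ω ∂μ, (M ω).IsHermitian) :
    (of fun i j => ∫ ω, M ω i j ∂μ).IsHermitian := by
  ext i j
  simp only [conjTranspose_apply, of_apply, star_trivial]
  exact integral_congr_ae (hM.mono fun ω h => by simpa using congrFun (congrFun h i) j)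

theorem mrpow_eq_cfc {m : ℕ} {X : Matrix (Fin m) (Fin m) ℝ} (hX : X.IsHermitian) (t : ℝ) :
    mrpow X t = cfc (fun x : ℝ => x ^ t) X := by
  rw [hX.cfc_eq, IsHermitian.cfc, mrpow, dif_pos hX, Unitary.conjStarAlgAut_apply]
  rfl

theorem isHermitian_mrpow {m : ℕ} {X : Matrix (Fin m) (Fin m) ℝ} (hX : X.IsHermitian) (t : ℝ) :
    (mrpow X t).IsHermitian := by
  rw [mrpow_eq_cfc hX]
  exact cfc_predicate _ X

section Complexify

/- Operator concavity of `a ↦ a ^ t` is available in complex C⋆-algebras only, so real matrices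
are embedded into `Matrix n n ℂ`, a C⋆-algebra for the L² operator norm. -/
open scoped Matrix.Norms.L2Operator MatrixOrder ComplexOrder

variable {n : Type*} [Fintype n] [DecidableEq n]

def complexify : Matrix n n ℝ →⋆ₐ[ℝ] Matrix n n ℂ :=
  { Complex.ofRealAm.mapMatrix with
    map_star' := fun M => by ext; simp }

@[simp] theorem complexify_apply (M : Matrix n n ℝ) : complexify M = M.map (↑) := rfl

@[fun_prop] theorem continuous_complexify :
    Continuous (complexify : Matrix n n ℝ → Matrix n n ℂ) :=
  continuous_id.matrix_map Complex.continuous_ofReal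

theorem complexify_mrpow {m : ℕ} {X : Matrix (Fin m) (Fin m) ℝ} (hX : X.IsHermitian)
    (hX₀ : 0 ≤ complexify X) (t : ℝ) : complexify (mrpow X t) = complexify X ^ t := by
  rw [mrpow_eq_cfc hX, CFC.rpow_eq_cfc_real hX₀]
  exact complexify.map_cfc _ X (X.finite_real_spectrum.continuousOn _) (hφa := hX₀.isSelfAdjoint)

def reQuadForm (x : n → ℝ) : Matrix n n ℂ →ₗ[ℝ] ℝ where
  toFun A := (star (Complex.ofReal ∘ x) ⬝ᵥ A *ᵥ (Complex.ofReal ∘ x)).re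
  map_add' A B := by simp [add_mulVec]
  map_smul' r A := by simp [smul_mulVec]

theorem reQuadForm_complexify (x : n → ℝ) (M : Matrix n n ℝ) :
    reQuadForm x (complexify M) = x ⬝ᵥ M *ᵥ x := by
  simp [reQuadForm, dotProduct, mulVec, Complex.re_sum]

omit [DecidableEq n] in
theorem monotone_reQuadForm (x : n → ℝ) : Monotone (reQuadForm x) := by
  intro A B hAB
  have := (le_iff.mp hAB).dotProduct_mulVec_nonneg (Complex.ofReal ∘ x)
  rw [sub_mulVec, dotProduct_sub, sub_nonneg] at this
  exact (Complex.le_def.mp this).1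

theorem dotProduct_mulVec_integral_mrpow_le {m : ℕ} {Ω : Type*} [MeasurableSpace Ω] {μ : Measure Ω}
    [IsProbabilityMeasure μ] {X : Ω → Matrix (Fin m) (Fin m) ℝ}
    (hpsd : ∀ᵐ ω ∂μ, (X ω).PosSemidef) {t : ℝ} (ht : t ∈ Icc 0 1)
    (hint : ∀ i j, Integrable (fun ω => X ω i j) μ)
    (hint' : ∀ i j, Integrable (fun ω => mrpow (X ω) t i j) μ) (x : Fin m → ℝ) :
    x ⬝ᵥ (of fun i j => ∫ ω, mrpow (X ω) t i j ∂μ) *ᵥ x ≤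
      x ⬝ᵥ mrpow (of fun i j => ∫ ω, X ω i j ∂μ) t *ᵥ x := by
  have hX₀ : ∀ᵐ ω ∂μ, 0 ≤ complexify (X ω) := hpsd.mono fun ω h => map_nonneg _ h.nonneg
  have hXc : Integrable (fun ω => complexify (X ω)) μ :=
    integrable_linearMap_comp complexify.toLinearMap hint
  have hmean : ∫ ω, complexify (X ω) ∂μ = complexify (of fun i j => ∫ ω, X ω i j ∂μ) :=
    integral_linearMap_comp complexify.toLinearMap hint
  have hmean₀ : 0 ≤ complexify (of fun i j => ∫ ω, X ω i j ∂μ) :=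
    hmean ▸ (convex_Ici 0).integral_mem isClosed_Ici hX₀ hXc
  have hmeanpow : ∫ ω, reQuadForm x (complexify (mrpow (X ω) t)) ∂μ =
      reQuadForm x (complexify (of fun i j => ∫ ω, mrpow (X ω) t i j ∂μ)) :=
    integral_linearMap_comp ((reQuadForm x).comp complexify.toLinearMap) hint'
  have hpow : ∀ᵐ ω ∂μ,
      reQuadForm x (complexify (mrpow (X ω) t)) = reQuadForm x (complexify (X ω) ^ t) := by
    filter_upwards [hpsd, hX₀] with ω hω hω₀
    rw [complexify_mrpow hω.1 hω₀]
  rw [← reQuadForm_complexify, ← reQuadForm_complexify, ← hmeanpow,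
    complexify_mrpow (isHermitian_of_integral (hpsd.mono fun _ h => h.1)) hmean₀, ← hmean]
  refine (integral_congr_ae hpow).trans_le
    (CFC.integral_map_rpow_le ht (LinearMap.toContinuousLinearMap (reQuadForm x))
      (monotone_reQuadForm x) hX₀ hXc ?_)
  exact (integrable_linearMap_comp ((reQuadForm x).comp complexify.toLinearMap) hint').congr hpow

end Complexify

open MeasureTheory in
/-- Operator concavity in expectation: `E[X^t] ⪯ (E[X])^t` for `t ∈ [0,1]`. -/
theorem stmt3 {m : ℕ} {Ω : Type*} [MeasurableSpace Ω] (μ : Measure Ω)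
    [IsProbabilityMeasure μ] (X : Ω → Matrix (Fin m) (Fin m) ℝ)
    (hpsd : ∀ᵐ ω ∂μ, (X ω).PosSemidef)
    {t : ℝ} (ht0 : 0 ≤ t) (ht1 : t ≤ 1)
    (hint : ∀ i j, Integrable (fun ω => X ω i j) μ)
    (hint' : ∀ i j, Integrable (fun ω => mrpow (X ω) t i j) μ) :
    (mrpow (Matrix.of fun i j => ∫ ω, X ω i j ∂μ) t -
      Matrix.of fun i j => ∫ ω, mrpow (X ω) t i j ∂μ).PosSemidef := by
  have hmean : (of fun i j => ∫ ω, X ω i j ∂μ).IsHermitian :=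
    isHermitian_of_integral (hpsd.mono fun _ h => h.1)
  have hmeanpow : (of fun i j => ∫ ω, mrpow (X ω) t i j ∂μ).IsHermitian :=
    isHermitian_of_integral (hpsd.mono fun _ h => isHermitian_mrpow h.1 t)
  refine .of_dotProduct_mulVec_nonneg ((isHermitian_mrpow hmean t).sub hmeanpow) fun x => ?_
  rw [star_trivial, sub_mulVec, dotProduct_sub, sub_nonneg]
  exact dotProduct_mulVec_integral_mrpow_le hpsd ⟨ht0, ht1⟩ hint hint' x

end Paper
end
end

section
/- Let X ∈ R^{m×n}, and let L ∈ R^{m×m}, R ∈ R^{n×n} be symmetric positive definite, with p,q > 0 satisfying 1/p + 1/q = 1. Then ‖L^{1/(4p)} X R^{1/(4q)}‖_F² ≤ ‖X‖_op² · ((1/p) tr(L^{1/2}) + (1/q) tr(R^{1/2})). -/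
/-!
Diagonalise `L = U Λ Uᵀ`, `R = V M Vᵀ` and put `Y = Uᵀ X V`. Then
`‖L^{1/(4p)} X R^{1/(4q)}‖_F² = ∑ᵢⱼ λᵢ^{1/(2p)} μⱼ^{1/(2q)} Yᵢⱼ²`, and weighted AM–GM bounds each
weight by `λᵢ^{1/2}/p + μⱼ^{1/2}/q`. A column of `Y` is `Uᵀ X` applied to a unit vector and a row
is `Vᵀ Xᵀ` applied to one, so every row and column of `Y` has squared norm at most `‖X‖²_op`;
summing the two halves of the weight separately gives the trace bound.
-/

open Matrix BigOperators

noncomputable section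

namespace Paper

lemma star_eq_transpose {n : Type*} (A : Matrix n n ℝ) : star A = Aᵀ := by
  rw [star_eq_conjTranspose, conjTranspose_eq_transpose_of_trivial]

lemma transpose_star_mul_mul {l n : Type*} [Fintype l] [Fintype n]
    (U : Matrix l l ℝ) (X : Matrix l n ℝ) (V : Matrix n n ℝ) :
    (star U * X * V)ᵀ = star V * Xᵀ * U := by
  rw [transpose_mul, transpose_mul, star_eq_transpose, star_eq_transpose, transpose_transpose,
    Matrix.mul_assoc]

section Orthogonal

variable {l n : Type*} [Fintype l] [DecidableEq l] [Fintype n] [DecidableEq n]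

lemma dotProduct_star_mulVec_self {U : Matrix n n ℝ} (hU : U ∈ unitaryGroup n ℝ) (w : n → ℝ) :
    (star U *ᵥ w) ⬝ᵥ (star U *ᵥ w) = w ⬝ᵥ w := by
  rw [dotProduct_mulVec, star_eq_transpose, vecMul_transpose, mulVec_mulVec, ← star_eq_transpose,
    mem_unitaryGroup_iff.mp hU, one_mulVec]

lemma dotProduct_col_self {V : Matrix n n ℝ} (hV : V ∈ unitaryGroup n ℝ) (j : n) :
    (fun i => V i j) ⬝ᵥ (fun i => V i j) = 1 := by
  have h := congr_fun₂ (mem_unitaryGroup_iff'.mp hV) j j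
  rwa [star_eq_transpose, mul_apply', one_apply_eq] at h

lemma _root_.Matrix.IsHermitian.dotProduct_mulVec_le {A : Matrix n n ℝ} (hA : A.IsHermitian)
    {c : ℝ} (hc : ∀ i, hA.eigenvalues i ≤ c) (x : n → ℝ) : x ⬝ᵥ (A *ᵥ x) ≤ c * (x ⬝ᵥ x) := by
  set U : Matrix n n ℝ := (hA.eigenvectorUnitary : Matrix n n ℝ)
  set y := star U *ᵥ x
  have hAx : A *ᵥ x = U *ᵥ (diagonal hA.eigenvalues *ᵥ y) := by
    conv_lhs => rw [hA.spectral_theorem, Unitary.conjStarAlgAut_apply]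
    simp only [mulVec_mulVec, y, Matrix.mul_assoc]
    rfl
  have hxU : x ᵥ* U = y := by
    rw [← transpose_transpose U, vecMul_transpose, ← star_eq_transpose]
  calc x ⬝ᵥ (A *ᵥ x) = ∑ i, hA.eigenvalues i * (y i * y i) := by
        rw [hAx, dotProduct_mulVec, hxU]
        simp only [dotProduct, mulVec_diagonal]
        exact Finset.sum_congr rfl fun i _ => by ring
    _ ≤ ∑ i, c * (y i * y i) :=
        Finset.sum_le_sum fun i _ => mul_le_mul_of_nonneg_right (hc i) (mul_self_nonneg _)
    _ = c * (x ⬝ᵥ x) := by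
        rw [← Finset.mul_sum, ← dotProduct_star_mulVec_self hA.eigenvectorUnitary.2 x]; rfl

lemma sum_sq_star_mul_mul_apply_le {U : Matrix l l ℝ} (hU : U ∈ unitaryGroup l ℝ)
    {V : Matrix n n ℝ} (hV : V ∈ unitaryGroup n ℝ)
    {X : Matrix l n ℝ} {c : ℝ} (hX : ∀ x, (X *ᵥ x) ⬝ᵥ (X *ᵥ x) ≤ c * (x ⬝ᵥ x)) (j : n) :
    ∑ i, (star U * X * V) i j ^ 2 ≤ c := by
  set v : n → ℝ := fun k => V k j
  have hcol : (fun i => (star U * X * V) i j) = star U *ᵥ (X *ᵥ v) := by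
    rw [Matrix.mul_assoc]; rfl
  calc ∑ i, (star U * X * V) i j ^ 2
      = (star U *ᵥ (X *ᵥ v)) ⬝ᵥ (star U *ᵥ (X *ᵥ v)) := by
        rw [← hcol]; simp only [dotProduct, sq]
    _ ≤ c * (v ⬝ᵥ v) := by rw [dotProduct_star_mulVec_self hU]; exact hX v
    _ = c := by rw [dotProduct_col_self hV, mul_one]

end Orthogonal

/-- Cauchy–Schwarz: `‖Xᵀu‖² = u ⬝ᵥ X(Xᵀu) ≤ ‖u‖ · √c ‖Xᵀu‖`. -/
lemma dotProduct_transpose_mulVec_self_le {l n : Type*} [Fintype l] [Fintype n]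
    {X : Matrix l n ℝ} {c : ℝ} (hc : 0 ≤ c)
    (hX : ∀ x, (X *ᵥ x) ⬝ᵥ (X *ᵥ x) ≤ c * (x ⬝ᵥ x)) (u : l → ℝ) :
    (Xᵀ *ᵥ u) ⬝ᵥ (Xᵀ *ᵥ u) ≤ c * (u ⬝ᵥ u) := by
  set s := (Xᵀ *ᵥ u) ⬝ᵥ (Xᵀ *ᵥ u)
  have hs : 0 ≤ s := dotProduct_self_star_nonneg _
  rcases hs.eq_or_lt with hs0 | hspos
  · rw [← hs0]; exact mul_nonneg hc (dotProduct_self_star_nonneg u)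
  have hsu : s = u ⬝ᵥ (X *ᵥ (Xᵀ *ᵥ u)) := by
    rw [dotProduct_mulVec, ← mulVec_transpose]
  have hCS : s * s ≤ (u ⬝ᵥ u) * ((X *ᵥ (Xᵀ *ᵥ u)) ⬝ᵥ (X *ᵥ (Xᵀ *ᵥ u))) := by
    nth_rw 1 [hsu]; rw [hsu, ← sq]
    simpa only [dotProduct, sq] using Finset.sum_mul_sq_le_sq_mul_sq Finset.univ u _
  refine le_of_mul_le_mul_right ?_ hspos
  calc s * s ≤ (u ⬝ᵥ u) * (c * s) :=
        hCS.trans (mul_le_mul_of_nonneg_left (hX _) (dotProduct_self_star_nonneg u))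
    _ = c * (u ⬝ᵥ u) * s := by ring

lemma sum_sum_add_mul_sq_le {ι κ : Type*} [Fintype ι] [Fintype κ] (Y : Matrix ι κ ℝ)
    {a : ι → ℝ} {b : κ → ℝ} {c : ℝ} (ha : ∀ i, 0 ≤ a i) (hb : ∀ j, 0 ≤ b j)
    (hrow : ∀ i, ∑ j, Y i j ^ 2 ≤ c) (hcol : ∀ j, ∑ i, Y i j ^ 2 ≤ c) :
    ∑ i, ∑ j, (a i + b j) * Y i j ^ 2 ≤ c * (∑ i, a i + ∑ j, b j) := by
  calc ∑ i, ∑ j, (a i + b j) * Y i j ^ 2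
      = ∑ i, a i * ∑ j, Y i j ^ 2 + ∑ j, b j * ∑ i, Y i j ^ 2 := by
        simp only [add_mul, Finset.sum_add_distrib, Finset.mul_sum]
        rw [Finset.sum_comm (f := fun i j => b j * Y i j ^ 2)]
    _ ≤ ∑ i, a i * c + ∑ j, b j * c := by
        gcongr with i _ j _
        · exact ha i
        · exact hrow i
        · exact hb j
        · exact hcol j
    _ = c * (∑ i, a i + ∑ j, b j) := by
        rw [← Finset.sum_mul, ← Finset.sum_mul]; ring

lemma sq_rpow_mul_sq_rpow_le {x y p q : ℝ} (hx : 0 ≤ x) (hy : 0 ≤ y) (hp : 0 < p) (hq : 0 < q)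
    (hpq : 1 / p + 1 / q = 1) :
    (x ^ (1 / (4 * p))) ^ 2 * (y ^ (1 / (4 * q))) ^ 2 ≤
      1 / p * x ^ (1 / 2 : ℝ) + 1 / q * y ^ (1 / 2 : ℝ) := by
  have hsq : ∀ {z r : ℝ}, 0 ≤ z → 0 < r →
      (z ^ (1 / (4 * r))) ^ 2 = (z ^ (1 / 2 : ℝ)) ^ (1 / r) := by
    intro z r hz hr
    rw [← Real.rpow_natCast, ← Real.rpow_mul hz, ← Real.rpow_mul hz]
    congr 1
    field_simp
    norm_num
  rw [hsq hx hp, hsq hy hq]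
  exact Real.geom_mean_le_arith_mean2_weighted (by positivity) (by positivity)
    (Real.rpow_nonneg hx _) (Real.rpow_nonneg hy _) hpq

section FinMatrix

variable {m n : ℕ}

lemma eigenvalues_conjTranspose_mul_self_le_opNorm_sq (X : Matrix (Fin m) (Fin n) ℝ) (i : Fin n) :
    (isHermitian_conjTranspose_mul_self X).eigenvalues i ≤ opNorm X ^ 2 := by
  have hsing : singVals X i ≤ opNorm X :=
    le_ciSup (Set.finite_range (singVals X)).bddAbove i
  calc (isHermitian_conjTranspose_mul_self X).eigenvalues i = singVals X i ^ 2 :=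
        (Real.sq_sqrt (eigenvalues_conjTranspose_mul_self_nonneg X i)).symm
    _ ≤ opNorm X ^ 2 := pow_le_pow_left₀ (Real.sqrt_nonneg _) hsing 2

lemma dotProduct_mulVec_self_le_opNorm_sq (X : Matrix (Fin m) (Fin n) ℝ) (x : Fin n → ℝ) :
    (X *ᵥ x) ⬝ᵥ (X *ᵥ x) ≤ opNorm X ^ 2 * (x ⬝ᵥ x) := by
  have h := (isHermitian_conjTranspose_mul_self X).dotProduct_mulVec_le
    (eigenvalues_conjTranspose_mul_self_le_opNorm_sq X) x
  rwa [← mulVec_mulVec, dotProduct_mulVec, conjTranspose_eq_transpose_of_trivial,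
    vecMul_transpose] at h

lemma frobNorm_sq (A : Matrix (Fin m) (Fin n) ℝ) : frobNorm A ^ 2 = ∑ i, ∑ j, A i j ^ 2 := by
  have htrace : (Aᴴ * A).trace = ∑ i, ∑ j, A i j ^ 2 := by
    rw [Finset.sum_comm]
    simp [trace, mul_apply, sq]
  rw [frobNorm, htrace, Real.sq_sqrt (by positivity)]

lemma frobNorm_mul_mul_star {U : Matrix (Fin m) (Fin m) ℝ} (hU : U ∈ unitaryGroup (Fin m) ℝ)
    {V : Matrix (Fin n) (Fin n) ℝ} (hV : V ∈ unitaryGroup (Fin n) ℝ)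
    (A : Matrix (Fin m) (Fin n) ℝ) :
    frobNorm (U * A * star V) = frobNorm A := by
  have hUU : Uᴴ * U = 1 := mem_unitaryGroup_iff'.mp hU
  have hVV : star V * V = 1 := mem_unitaryGroup_iff'.mp hV
  rw [frobNorm, frobNorm, conjTranspose_mul, conjTranspose_mul, ← star_eq_conjTranspose (star V),
    star_star]
  congr 1
  calc (V * (Aᴴ * Uᴴ) * (U * A * star V)).trace = (V * Aᴴ * (Uᴴ * U) * A * star V).trace := by
        simp only [Matrix.mul_assoc]
    _ = (star V * V * Aᴴ * A).trace := by
        rw [trace_mul_comm, hUU, Matrix.mul_one]; simp only [Matrix.mul_assoc]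
    _ = (Aᴴ * A).trace := by rw [hVV, Matrix.one_mul]

lemma mrpow_of_isHermitian {A : Matrix (Fin m) (Fin m) ℝ} (hA : A.IsHermitian) (t : ℝ) :
    mrpow A t = (hA.eigenvectorUnitary : Matrix (Fin m) (Fin m) ℝ) *
      diagonal (fun i => hA.eigenvalues i ^ t) *
      star (hA.eigenvectorUnitary : Matrix (Fin m) (Fin m) ℝ) :=
  dif_pos hA

lemma trace_mrpow {A : Matrix (Fin m) (Fin m) ℝ} (hA : A.IsHermitian) (t : ℝ) :
    (mrpow A t).trace = ∑ i, hA.eigenvalues i ^ t := by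
  rw [mrpow_of_isHermitian hA, trace_mul_comm, ← Matrix.mul_assoc,
    UnitaryGroup.star_mul_self, Matrix.one_mul, trace_diagonal]

lemma frobNorm_mrpow_mul_mul_mrpow_sq {A : Matrix (Fin m) (Fin m) ℝ} {B : Matrix (Fin n) (Fin n) ℝ}
    (hA : A.IsHermitian) (hB : B.IsHermitian) (s t : ℝ) (X : Matrix (Fin m) (Fin n) ℝ) :
    frobNorm (mrpow A s * X * mrpow B t) ^ 2 =
      ∑ i, ∑ j, (hA.eigenvalues i ^ s *
        (star (hA.eigenvectorUnitary : Matrix (Fin m) (Fin m) ℝ) * X *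
          (hB.eigenvectorUnitary : Matrix (Fin n) (Fin n) ℝ)) i j *
        hB.eigenvalues j ^ t) ^ 2 := by
  set U : Matrix (Fin m) (Fin m) ℝ := (hA.eigenvectorUnitary : Matrix (Fin m) (Fin m) ℝ)
  set V : Matrix (Fin n) (Fin n) ℝ := (hB.eigenvectorUnitary : Matrix (Fin n) (Fin n) ℝ)
  have hconj : mrpow A s * X * mrpow B t = U *
      (diagonal (fun i => hA.eigenvalues i ^ s) * (star U * X * V) *
        diagonal (fun j => hB.eigenvalues j ^ t)) * star V := by
    rw [mrpow_of_isHermitian hA, mrpow_of_isHermitian hB]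
    simp only [Matrix.mul_assoc]
    rfl
  rw [hconj, frobNorm_mul_mul_star hA.eigenvectorUnitary.2 hB.eigenvectorUnitary.2, frobNorm_sq]
  simp only [mul_diagonal, diagonal_mul]

end FinMatrix

/-- Weight decay term bound:
`‖L^{1/(4p)} X R^{1/(4q)}‖_F² ≤ ‖X‖_op² ((1/p) tr L^{1/2} + (1/q) tr R^{1/2})`. -/
theorem stmt13 {m n : ℕ} (X : Matrix (Fin m) (Fin n) ℝ)
    {L : Matrix (Fin m) (Fin m) ℝ} {R : Matrix (Fin n) (Fin n) ℝ}
    (hL : L.PosDef) (hR : R.PosDef)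
    {p q : ℝ} (hp : 0 < p) (hq : 0 < q) (hpq : 1 / p + 1 / q = 1) :
    frobNorm (mrpow L (1 / (4 * p)) * X * mrpow R (1 / (4 * q))) ^ (2 : ℕ) ≤
      opNorm X ^ (2 : ℕ) *
        ((1 / p) * (mrpow L (1/2)).trace + (1 / q) * (mrpow R (1/2)).trace) := by
  set U : Matrix (Fin m) (Fin m) ℝ := (hL.1.eigenvectorUnitary : Matrix (Fin m) (Fin m) ℝ)
  set V : Matrix (Fin n) (Fin n) ℝ := (hR.1.eigenvectorUnitary : Matrix (Fin n) (Fin n) ℝ)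
  set Y := star U * X * V
  have hX := dotProduct_mulVec_self_le_opNorm_sq X
  have hcol : ∀ j, ∑ i, Y i j ^ 2 ≤ opNorm X ^ 2 :=
    sum_sq_star_mul_mul_apply_le hL.1.eigenvectorUnitary.2 hR.1.eigenvectorUnitary.2 hX
  have hrow : ∀ i, ∑ j, Y i j ^ 2 ≤ opNorm X ^ 2 := fun i => by
    simpa only [Y, ← transpose_apply (star U * X * V), transpose_star_mul_mul] using
      sum_sq_star_mul_mul_apply_le hR.1.eigenvectorUnitary.2 hL.1.eigenvectorUnitary.2
        (dotProduct_transpose_mulVec_self_le (sq_nonneg _) hX) i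
  rw [frobNorm_mrpow_mul_mul_mrpow_sq hL.1 hR.1, trace_mrpow hL.1, trace_mrpow hR.1,
    Finset.mul_sum, Finset.mul_sum]
  calc _ ≤ ∑ i, ∑ j, (1 / p * hL.1.eigenvalues i ^ (1 / 2 : ℝ) +
        1 / q * hR.1.eigenvalues j ^ (1 / 2 : ℝ)) * Y i j ^ 2 := by
        gcongr with i _ j _
        rw [mul_pow, mul_pow, mul_right_comm]
        exact mul_le_mul_of_nonneg_right (sq_rpow_mul_sq_rpow_le (hL.eigenvalues_pos i).le
          (hR.eigenvalues_pos j).le hp hq hpq) (sq_nonneg _)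
    _ ≤ _ := sum_sum_add_mul_sq_le Y
        (fun i => mul_nonneg (by positivity) (Real.rpow_nonneg (hL.eigenvalues_pos i).le _))
        (fun j => mul_nonneg (by positivity) (Real.rpow_nonneg (hR.eigenvalues_pos j).le _))
        hrow hcol

end Paper
end
end

section
/- Let A ∈ R^{m×n}, and let L ∈ R^{m×m}, R ∈ R^{n×n} be symmetric positive definite with p,q > 0, 1/p + 1/q = 1. Then ‖A‖_* ≤ (tr(L^{1/2}))^{1/(2p)} (tr(R^{1/2}))^{1/(2q)} ‖L^{−1/(4p)} A R^{−1/(4q)}‖_F. -/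
open Matrix BigOperators

noncomputable section

namespace Paper

/-! ### Auxiliary scalar lemmas -/

section helpers

variable {ι κ : Type*} [Fintype ι] [Fintype κ]

/-- Parseval: expanding in an orthonormal family indexed by `κ`. -/
lemma parseval [DecidableEq κ] (E : ι → κ → ℝ) (c : κ → ℝ)
    (hE : ∀ k k', (∑ y, E y k * E y k') = if k = k' then (1:ℝ) else 0) :
    ∑ y, (∑ k, c k * E y k) ^ 2 = ∑ k, (c k) ^ 2 := by
  have step : ∀ y : ι, (∑ k, c k * E y k) ^ 2
      = ∑ k, ∑ k', (c k * c k') * (E y k * E y k') := by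
    intro y
    rw [sq, Finset.sum_mul_sum]
    exact Finset.sum_congr rfl fun k _ => Finset.sum_congr rfl fun k' _ => by ring
  calc ∑ y, (∑ k, c k * E y k) ^ 2
      = ∑ k, ∑ k', (c k * c k') * ∑ y, (E y k * E y k') := by
        simp_rw [step, Finset.mul_sum]
        rw [Finset.sum_comm]
        exact Finset.sum_congr rfl fun k _ => Finset.sum_comm
    _ = ∑ k, (c k) ^ 2 := by
        refine Finset.sum_congr rfl fun k _ => ?_
        rw [Finset.sum_eq_single k]
        · rw [hE k k, if_pos rfl, mul_one, sq]
        · intro k' _ hk'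
          rw [hE k k', if_neg (Ne.symm hk'), mul_zero]
        · intro h; exact absurd (Finset.mem_univ k) h

/-- Norm bound for a combination of an "orthogonal, norm ≤ 1" family. -/
lemma norm_sum_le (u : ι → κ → ℝ)
    (horth : ∀ i j, i ≠ j → (∑ x, u i x * u j x) = 0)
    (hnorm : ∀ i, (∑ x, u i x * u i x) ≤ 1)
    (c : ι → ℝ) :
    ∑ x, (∑ i, c i * u i x) ^ 2 ≤ ∑ i, (c i) ^ 2 := by
  classical
  have step : ∀ x : κ, (∑ i, c i * u i x) ^ 2
      = ∑ i, ∑ j, (c i * c j) * (u i x * u j x) := by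
    intro x
    rw [sq, Finset.sum_mul_sum]
    exact Finset.sum_congr rfl fun i _ => Finset.sum_congr rfl fun j _ => by ring
  have expand : ∑ x, (∑ i, c i * u i x) ^ 2
      = ∑ i, ∑ j, (c i * c j) * ∑ x, (u i x * u j x) := by
    simp_rw [step, Finset.mul_sum]
    rw [Finset.sum_comm]
    exact Finset.sum_congr rfl fun i _ => Finset.sum_comm
  rw [expand]
  have diag : ∀ i, (∑ j, (c i * c j) * ∑ x, (u i x * u j x))
      = (c i)^2 * ∑ x, u i x * u i x := by
    intro i
    rw [Finset.sum_eq_single i]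
    · rw [sq]
    · intro j _ hj
      rw [horth i j (Ne.symm hj), mul_zero]
    · intro h; exact absurd (Finset.mem_univ i) h
  rw [Finset.sum_congr rfl fun i _ => diag i]
  refine Finset.sum_le_sum fun i _ => ?_
  calc (c i)^2 * ∑ x, u i x * u i x ≤ (c i)^2 * 1 :=
        mul_le_mul_of_nonneg_left (hnorm i) (sq_nonneg _)
    _ = (c i)^2 := mul_one _

/-- Bessel inequality for an "orthogonal, norm ≤ 1" family. -/
lemma bessel (u : ι → κ → ℝ)
    (horth : ∀ i j, i ≠ j → (∑ x, u i x * u j x) = 0)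
    (hnorm : ∀ i, (∑ x, u i x * u i x) ≤ 1)
    (f : κ → ℝ) (hf : (∑ x, f x * f x) ≤ 1) :
    ∑ i, (∑ x, f x * u i x) ^ 2 ≤ 1 := by
  set c : ι → ℝ := fun i => ∑ x, f x * u i x with hc
  have h0 : (0:ℝ) ≤ ∑ x, (f x - ∑ i, c i * u i x)^2 :=
    Finset.sum_nonneg fun _ _ => sq_nonneg _
  have hmid : ∑ x, f x * (∑ i, c i * u i x) = ∑ i, (c i)^2 := by
    simp_rw [Finset.mul_sum]
    rw [Finset.sum_comm]
    refine Finset.sum_congr rfl fun i _ => ?_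
    calc ∑ x, f x * (c i * u i x) = c i * ∑ x, f x * u i x := by
          rw [Finset.mul_sum]; exact Finset.sum_congr rfl fun x _ => by ring
      _ = (c i)^2 := by rw [sq]
  have hexp : ∑ x, (f x - ∑ i, c i * u i x)^2
      = (∑ x, f x * f x) - 2 * (∑ i, (c i)^2) + ∑ x, (∑ i, c i * u i x)^2 := by
    have hx : ∀ x, (f x - ∑ i, c i * u i x)^2
        = f x * f x - 2 * (f x * (∑ i, c i * u i x)) + (∑ i, c i * u i x)^2 := fun x => by ring
    simp_rw [hx, Finset.sum_add_distrib, Finset.sum_sub_distrib, ← Finset.mul_sum, hmid]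
  have h2 := norm_sum_le u horth hnorm c
  rw [hexp] at h0
  have hfin : ∑ i, (c i)^2 ≤ ∑ x, f x * f x := by linarith
  exact le_trans hfin hf

/-- Hölder-type inequality with a doubly substochastic kernel. -/
lemma holder_sub (a : ι → ℝ) (b : κ → ℝ) (c : ι → κ → ℝ)
    (ha : ∀ k, 0 ≤ a k) (hb : ∀ l, 0 ≤ b l) (hc : ∀ k l, 0 ≤ c k l)
    (hrow : ∀ k, (∑ l, c k l) ≤ 1) (hcol : ∀ l, (∑ k, c k l) ≤ 1)
    {p q : ℝ} (hpq : p.HolderConjugate q) :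
    ∑ k, ∑ l, (a k * b l) * c k l
      ≤ (∑ k, a k ^ p) ^ (1/p) * (∑ l, b l ^ q) ^ (1/q) := by
  have hp0 : 0 < p := hpq.pos
  have hq0 : 0 < q := hpq.symm.pos
  have hap : ∀ k, 0 ≤ a k ^ p := fun k => Real.rpow_nonneg (ha k) p
  have hbq : ∀ l, 0 ≤ b l ^ q := fun l => Real.rpow_nonneg (hb l) q
  have hA0 : 0 ≤ ∑ k, a k ^ p := Finset.sum_nonneg fun k _ => hap k
  have hB0 : 0 ≤ ∑ l, b l ^ q := Finset.sum_nonneg fun l _ => hbq l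
  by_cases hA : (∑ k, a k ^ p) = 0
  · have haz : ∀ k, a k = 0 := by
      intro k
      have := (Finset.sum_eq_zero_iff_of_nonneg (fun k _ => hap k)).mp hA k (Finset.mem_univ k)
      have := (Real.rpow_eq_zero (ha k) hp0.ne').mp this
      exact this
    have : ∑ k, ∑ l, (a k * b l) * c k l = 0 :=
      Finset.sum_eq_zero fun k _ => Finset.sum_eq_zero fun l _ => by rw [haz k]; ring
    rw [this, hA, Real.zero_rpow (by positivity : (1:ℝ)/p ≠ 0), zero_mul]
  by_cases hB : (∑ l, b l ^ q) = 0
  · have hbz : ∀ l, b l = 0 := by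
      intro l
      have := (Finset.sum_eq_zero_iff_of_nonneg (fun l _ => hbq l)).mp hB l (Finset.mem_univ l)
      exact (Real.rpow_eq_zero (hb l) hq0.ne').mp this
    have : ∑ k, ∑ l, (a k * b l) * c k l = 0 :=
      Finset.sum_eq_zero fun k _ => Finset.sum_eq_zero fun l _ => by rw [hbz l]; ring
    rw [this, hB, Real.zero_rpow (by positivity : (1:ℝ)/q ≠ 0), mul_zero]
  have hApos : 0 < ∑ k, a k ^ p := lt_of_le_of_ne hA0 (Ne.symm hA)
  have hBpos : 0 < ∑ l, b l ^ q := lt_of_le_of_ne hB0 (Ne.symm hB)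
  set Sa : ℝ := (∑ k, a k ^ p) ^ (1/p) with hSa
  set Sb : ℝ := (∑ l, b l ^ q) ^ (1/q) with hSb
  have hSap : 0 < Sa := Real.rpow_pos_of_pos hApos _
  have hSbp : 0 < Sb := Real.rpow_pos_of_pos hBpos _
  have hSaP : Sa ^ p = ∑ k, a k ^ p := by
    rw [hSa, ← Real.rpow_mul hA0, one_div, inv_mul_cancel₀ hp0.ne', Real.rpow_one]
  have hSbQ : Sb ^ q = ∑ l, b l ^ q := by
    rw [hSb, ← Real.rpow_mul hB0, one_div, inv_mul_cancel₀ hq0.ne', Real.rpow_one]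
  have young : ∀ k l, (a k * b l) * c k l
      ≤ (Sa * Sb) * (((a k / Sa) ^ p / p + (b l / Sb) ^ q / q) * c k l) := by
    intro k l
    have hY := Real.young_inequality_of_nonneg
      (div_nonneg (ha k) hSap.le) (div_nonneg (hb l) hSbp.le) hpq
    have hSane : Sa ≠ 0 := hSap.ne'
    have hSbne : Sb ≠ 0 := hSbp.ne'
    calc (a k * b l) * c k l
        = (Sa * Sb) * (((a k / Sa) * (b l / Sb)) * c k l) := by
          field_simp
      _ ≤ (Sa * Sb) * (((a k / Sa) ^ p / p + (b l / Sb) ^ q / q) * c k l) :=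
          mul_le_mul_of_nonneg_left (mul_le_mul_of_nonneg_right hY (hc k l))
            (mul_nonneg hSap.le hSbp.le)
  have step1 : ∑ k, ∑ l, (a k * b l) * c k l
      ≤ (Sa * Sb) * ∑ k, ∑ l, ((a k / Sa) ^ p / p + (b l / Sb) ^ q / q) * c k l := by
    rw [Finset.mul_sum]
    refine Finset.sum_le_sum fun k _ => ?_
    rw [Finset.mul_sum]
    exact Finset.sum_le_sum fun l _ => young k l
  have split : ∑ k, ∑ l, ((a k / Sa) ^ p / p + (b l / Sb) ^ q / q) * c k l
      = (∑ k, (a k / Sa) ^ p / p * (∑ l, c k l))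
        + ∑ l, (b l / Sb) ^ q / q * (∑ k, c k l) := by
    have hx : ∀ k, ∑ l, ((a k / Sa) ^ p / p + (b l / Sb) ^ q / q) * c k l
        = (a k / Sa) ^ p / p * (∑ l, c k l) + ∑ l, (b l / Sb) ^ q / q * c k l := by
      intro k
      rw [Finset.mul_sum, ← Finset.sum_add_distrib]
      exact Finset.sum_congr rfl fun l _ => by ring
    simp_rw [hx]
    rw [Finset.sum_add_distrib]
    congr 1
    rw [Finset.sum_comm]
    exact Finset.sum_congr rfl fun l _ => by rw [Finset.mul_sum]
  have bnd1 : (∑ k, (a k / Sa) ^ p / p * (∑ l, c k l)) ≤ 1 / p := by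
    have sum_eq : ∑ k, (a k / Sa) ^ p / p = 1 / p := by
      have : ∀ k, (a k / Sa) ^ p / p = a k ^ p / Sa ^ p / p := by
        intro k; rw [Real.div_rpow (ha k) hSap.le]
      simp_rw [this]
      rw [← Finset.sum_div, ← Finset.sum_div, hSaP, div_self hA]
    calc (∑ k, (a k / Sa) ^ p / p * (∑ l, c k l))
        ≤ ∑ k, (a k / Sa) ^ p / p := by
          refine Finset.sum_le_sum fun k _ => ?_
          have h1 : 0 ≤ (a k / Sa) ^ p / p :=
            div_nonneg (Real.rpow_nonneg (div_nonneg (ha k) hSap.le) p) hp0.le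
          calc (a k / Sa) ^ p / p * (∑ l, c k l) ≤ (a k / Sa) ^ p / p * 1 :=
                mul_le_mul_of_nonneg_left (hrow k) h1
            _ = (a k / Sa) ^ p / p := mul_one _
      _ = 1 / p := sum_eq
  have bnd2 : (∑ l, (b l / Sb) ^ q / q * (∑ k, c k l)) ≤ 1 / q := by
    have sum_eq : ∑ l, (b l / Sb) ^ q / q = 1 / q := by
      have : ∀ l, (b l / Sb) ^ q / q = b l ^ q / Sb ^ q / q := by
        intro l; rw [Real.div_rpow (hb l) hSbp.le]
      simp_rw [this]
      rw [← Finset.sum_div, ← Finset.sum_div, hSbQ, div_self hB]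
    calc (∑ l, (b l / Sb) ^ q / q * (∑ k, c k l))
        ≤ ∑ l, (b l / Sb) ^ q / q := by
          refine Finset.sum_le_sum fun l _ => ?_
          have h1 : 0 ≤ (b l / Sb) ^ q / q :=
            div_nonneg (Real.rpow_nonneg (div_nonneg (hb l) hSbp.le) q) hq0.le
          calc (b l / Sb) ^ q / q * (∑ k, c k l) ≤ (b l / Sb) ^ q / q * 1 :=
                mul_le_mul_of_nonneg_left (hcol l) h1
            _ = (b l / Sb) ^ q / q := mul_one _
      _ = 1 / q := sum_eq
  calc ∑ k, ∑ l, (a k * b l) * c k l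
      ≤ (Sa * Sb) * ∑ k, ∑ l, ((a k / Sa) ^ p / p + (b l / Sb) ^ q / q) * c k l := step1
    _ ≤ (Sa * Sb) * (1/p + 1/q) := by
        rw [split]
        exact mul_le_mul_of_nonneg_left (add_le_add bnd1 bnd2)
          (mul_nonneg hSap.le hSbp.le)
    _ = Sa * Sb := by
        rw [one_div, one_div, hpq.inv_add_inv_eq_one, mul_one]

end helpers

/-! ### mrpow lemmas -/

section mrpow_lemmas

variable {N : ℕ} {S : Matrix (Fin N) (Fin N) ℝ}

lemma mrpow_eq (h : S.IsHermitian) (t : ℝ) :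
    mrpow S t = (Matrix.IsHermitian.eigenvectorUnitary h : Matrix (Fin N) (Fin N) ℝ) *
      Matrix.diagonal (fun i => (h.eigenvalues i) ^ t) *
      star (Matrix.IsHermitian.eigenvectorUnitary h : Matrix (Fin N) (Fin N) ℝ) :=
  dif_pos h

/-- columns of a real unitary matrix are orthonormal -/
lemma unitary_cols {U : Matrix (Fin N) (Fin N) ℝ} (hU : U ∈ Matrix.unitaryGroup (Fin N) ℝ)
    (i j : Fin N) : (∑ a, U a i * U a j) = if i = j then (1:ℝ) else 0 := by
  have h := Matrix.mem_unitaryGroup_iff'.mp hU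
  have := congrFun (congrFun h i) j
  rw [Matrix.mul_apply] at this
  simp only [Matrix.star_apply, star_trivial] at this
  simp only [Matrix.one_apply] at this
  exact this

/-- rows of a real unitary matrix are orthonormal -/
lemma unitary_rows {U : Matrix (Fin N) (Fin N) ℝ} (hU : U ∈ Matrix.unitaryGroup (Fin N) ℝ)
    (a b : Fin N) : (∑ i, U a i * U b i) = if a = b then (1:ℝ) else 0 := by
  have h := Matrix.mem_unitaryGroup_iff.mp hU
  have := congrFun (congrFun h a) b
  rw [Matrix.mul_apply] at this
  simp only [Matrix.star_apply, star_trivial] at this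
  simp only [Matrix.one_apply] at this
  exact this

lemma udu_apply (U : Matrix (Fin N) (Fin N) ℝ) (d : Fin N → ℝ) (a b : Fin N) :
    (U * Matrix.diagonal d * star U) a b = ∑ k, d k * (U a k * U b k) := by
  rw [Matrix.mul_apply]
  refine Finset.sum_congr rfl fun k _ => ?_
  rw [Matrix.mul_diagonal, Matrix.star_apply, star_trivial]
  ring

lemma mrpow_apply (h : S.IsHermitian) (t : ℝ) (a b : Fin N) :
    mrpow S t a b = ∑ k, (h.eigenvalues k) ^ t *
      ((Matrix.IsHermitian.eigenvectorUnitary h : Matrix (Fin N) (Fin N) ℝ) a k *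
       (Matrix.IsHermitian.eigenvectorUnitary h : Matrix (Fin N) (Fin N) ℝ) b k) := by
  rw [mrpow_eq h t, udu_apply]

lemma mrpow_trace (h : S.IsHermitian) (t : ℝ) :
    (mrpow S t).trace = ∑ k, (h.eigenvalues k) ^ t := by
  rw [mrpow_eq h t, Matrix.trace_mul_cycle,
    Matrix.mem_unitaryGroup_iff'.mp (Matrix.IsHermitian.eigenvectorUnitary h).2, one_mul,
    Matrix.trace_diagonal]

lemma mrpow_mul_mrpow (hS : S.PosDef) (s t : ℝ) :
    mrpow S s * mrpow S t = mrpow S (s + t) := by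
  have h := hS.isHermitian
  rw [mrpow_eq h s, mrpow_eq h t, mrpow_eq h (s + t)]
  set U := (Matrix.IsHermitian.eigenvectorUnitary h : Matrix (Fin N) (Fin N) ℝ)
  have hsU : star U * U = 1 :=
    Matrix.mem_unitaryGroup_iff'.mp (Matrix.IsHermitian.eigenvectorUnitary h).2
  have key : U * Matrix.diagonal (fun i => (h.eigenvalues i) ^ s) * star U *
      (U * Matrix.diagonal (fun i => (h.eigenvalues i) ^ t) * star U)
      = U * (Matrix.diagonal (fun i => (h.eigenvalues i) ^ s) *
        Matrix.diagonal (fun i => (h.eigenvalues i) ^ t)) * star U := by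
    rw [Matrix.mul_assoc (U * _) (star U) _, Matrix.mul_assoc U _ (star U),
      ← Matrix.mul_assoc (star U) U _, hsU, Matrix.one_mul,
      ← Matrix.mul_assoc _ _ (star U), ← Matrix.mul_assoc, Matrix.mul_assoc U]
  have hd : (fun i => (h.eigenvalues i) ^ s * (h.eigenvalues i) ^ t)
      = fun i => (h.eigenvalues i) ^ (s + t) := by
    funext i; rw [← Real.rpow_add (hS.eigenvalues_pos i)]
  rw [key, Matrix.diagonal_mul_diagonal, hd]

lemma mrpow_zero (h : S.IsHermitian) : mrpow S 0 = 1 := by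
  rw [mrpow_eq h 0]
  simp only [Real.rpow_zero, Matrix.diagonal_one, Matrix.mul_one]
  exact Matrix.mem_unitaryGroup_iff.mp (Matrix.IsHermitian.eigenvectorUnitary h).2

end mrpow_lemmas

/-! ### The core bound -/

lemma prod_orthonormal {m n : ℕ} (F : Matrix (Fin m) (Fin m) ℝ) (G : Matrix (Fin n) (Fin n) ℝ)
    (hFc : ∀ k k', (∑ y, F y k * F y k') = if k = k' then (1:ℝ) else 0)
    (hGc : ∀ l l', (∑ z, G z l * G z l') = if l = l' then (1:ℝ) else 0) :
    ∀ kl k'l' : Fin m × Fin n,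
      (∑ yz : Fin m × Fin n, (F yz.1 kl.1 * G yz.2 kl.2) * (F yz.1 k'l'.1 * G yz.2 k'l'.2))
        = if kl = k'l' then (1:ℝ) else 0 := by
  rintro ⟨k, l⟩ ⟨k', l'⟩
  rw [Fintype.sum_prod_type]
  have step : ∀ y : Fin m, (∑ z : Fin n, (F y k * G z l) * (F y k' * G z l'))
      = (F y k * F y k') * ∑ z, G z l * G z l' := by
    intro y; rw [Finset.mul_sum]; exact Finset.sum_congr rfl fun z _ => by ring
  simp_rw [step]
  rw [← Finset.sum_mul, hFc, hGc]
  by_cases h1 : k = k' <;> by_cases h2 : l = l' <;> simp [h1, h2, Prod.ext_iff]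

set_option maxHeartbeats 1000000 in
lemma core_bound {m n : ℕ}
    (u : Fin n → Fin m → ℝ)
    (F : Matrix (Fin m) (Fin m) ℝ) (V G : Matrix (Fin n) (Fin n) ℝ)
    (B : Matrix (Fin m) (Fin n) ℝ)
    (a : Fin m → ℝ) (b : Fin n → ℝ)
    (fu : Fin n → Fin m → ℝ) (gv : Fin n → Fin n → ℝ)
    (M : Fin m → Fin n → ℝ)
    (hfu : ∀ i k, fu i k = ∑ x, F x k * u i x)
    (hgv : ∀ i l, gv i l = ∑ c, G c l * V c i)
    (hM : ∀ y z, M y z = ∑ i, (∑ k, (a k * fu i k) * F y k) *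
        (∑ l, (b l * gv i l) * G z l))
    (hFc : ∀ k k', (∑ y, F y k * F y k') = if k = k' then (1:ℝ) else 0)
    (hFr : ∀ x x', (∑ k, F x k * F x' k) = if x = x' then (1:ℝ) else 0)
    (hGc : ∀ l l', (∑ z, G z l * G z l') = if l = l' then (1:ℝ) else 0)
    (hGr : ∀ c c', (∑ l, G c l * G c' l) = if c = c' then (1:ℝ) else 0)
    (hVc : ∀ i i', (∑ c, V c i * V c i') = if i = i' then (1:ℝ) else 0)
    (hVr : ∀ c c', (∑ i, V c i * V c' i) = if c = c' then (1:ℝ) else 0)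
    (horth : ∀ i j, i ≠ j → (∑ x, u i x * u j x) = 0)
    (hnorm : ∀ i, (∑ x, u i x * u i x) ≤ 1)
    (ha : ∀ k, 0 ≤ a k) (hb : ∀ l, 0 ≤ b l)
    {p q : ℝ} (hpq : p.HolderConjugate q) :
    ∑ y, ∑ z, M y z * B y z
      ≤ Real.sqrt ((∑ k, ((a k)^2) ^ p) ^ (1/p) * (∑ l, ((b l)^2) ^ q) ^ (1/q))
        * Real.sqrt (∑ y, ∑ z, (B y z)^2) := by
  classical
  set d : Fin m → Fin n → ℝ := fun k l => ∑ i, fu i k * gv i l with hd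
  have hMexp : ∀ y z, M y z = ∑ kl : Fin m × Fin n,
      ((a kl.1 * b kl.2) * d kl.1 kl.2) * (F y kl.1 * G z kl.2) := by
    intro y z
    rw [hM y z, Fintype.sum_prod_type]
    have step1 : ∀ i, (∑ k, (a k * fu i k) * F y k) * (∑ l, (b l * gv i l) * G z l)
        = ∑ k, ∑ l, ((a k * b l) * (F y k * G z l)) * (fu i k * gv i l) := by
      intro i
      rw [Finset.sum_mul_sum]
      exact Finset.sum_congr rfl fun k _ => Finset.sum_congr rfl fun l _ => by ring
    calc ∑ i, (∑ k, (a k * fu i k) * F y k) * (∑ l, (b l * gv i l) * G z l)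
        = ∑ k, ∑ l, ∑ i, ((a k * b l) * (F y k * G z l)) * (fu i k * gv i l) := by
          simp_rw [step1]
          rw [Finset.sum_comm]
          exact Finset.sum_congr rfl fun k _ => Finset.sum_comm
      _ = ∑ k, ∑ l, ((a k * b l) * d k l) * (F y k * G z l) := by
          refine Finset.sum_congr rfl fun k _ => Finset.sum_congr rfl fun l _ => ?_
          rw [← Finset.mul_sum, hd]
          ring
  have hprodE := prod_orthonormal F G hFc hGc
  have hsq : ∑ yz : Fin m × Fin n, (M yz.1 yz.2)^2
      = ∑ kl : Fin m × Fin n, ((a kl.1 * b kl.2) * d kl.1 kl.2)^2 := by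
    have hpv := parseval (E := fun (yz : Fin m × Fin n) (kl : Fin m × Fin n) =>
      F yz.1 kl.1 * G yz.2 kl.2)
      (c := fun kl => (a kl.1 * b kl.2) * d kl.1 kl.2) hprodE
    rw [← hpv]
    exact Finset.sum_congr rfl fun yz _ => by rw [hMexp yz.1 yz.2]
  have hrow : ∀ k, (∑ l, (d k l)^2) ≤ 1 := by
    intro k
    set e : Fin n → ℝ := fun c => ∑ i, fu i k * V c i with he
    have hdk : ∀ l, d k l = ∑ c, e c * G c l := by
      intro l
      rw [hd]
      calc ∑ i, fu i k * gv i l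
          = ∑ i, ∑ c, (fu i k * V c i) * G c l := by
            refine Finset.sum_congr rfl fun i _ => ?_
            rw [hgv i l, Finset.mul_sum]
            exact Finset.sum_congr rfl fun c _ => by ring
        _ = ∑ c, (∑ i, fu i k * V c i) * G c l := by
            rw [Finset.sum_comm]
            exact Finset.sum_congr rfl fun c _ => (Finset.sum_mul _ _ _).symm
    have h1 : ∑ l, (d k l)^2 = ∑ c, (e c)^2 := by
      have hpv := parseval (E := fun (l : Fin n) (c : Fin n) => G c l) (c := e)
        (fun c c' => hGr c c')
      rw [← hpv]
      try exact Finset.sum_congr rfl fun l _ => by rw [hdk l]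
    have h2 : ∑ c, (e c)^2 = ∑ i, (fu i k)^2 := by
      have hpv := parseval (E := fun (c : Fin n) (i : Fin n) => V c i)
        (c := fun i => fu i k) hVc
      rw [← hpv]
      try exact Finset.sum_congr rfl fun c _ => by rw [he]
    have h3 : ∑ i, (fu i k)^2 ≤ 1 := by
      have hf1 : (∑ x, F x k * F x k) ≤ 1 := by rw [hFc k k, if_pos rfl]
      have hbb := bessel u horth hnorm (fun x => F x k) hf1
      calc ∑ i, (fu i k)^2 = ∑ i, (∑ x, F x k * u i x)^2 := by simp_rw [hfu]
        _ ≤ 1 := hbb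
    rw [h1, h2]; exact h3
  have hcol : ∀ l, (∑ k, (d k l)^2) ≤ 1 := by
    intro l
    set h : Fin m → ℝ := fun x => ∑ i, gv i l * u i x with hh
    have hdl : ∀ k, d k l = ∑ x, h x * F x k := by
      intro k
      rw [hd]
      calc ∑ i, fu i k * gv i l
          = ∑ i, ∑ x, (gv i l * u i x) * F x k := by
            refine Finset.sum_congr rfl fun i _ => ?_
            rw [hfu i k, Finset.sum_mul]
            exact Finset.sum_congr rfl fun x _ => by ring
        _ = ∑ x, (∑ i, gv i l * u i x) * F x k := by
            rw [Finset.sum_comm]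
            exact Finset.sum_congr rfl fun x _ => (Finset.sum_mul _ _ _).symm
    have h1 : ∑ k, (d k l)^2 = ∑ x, (h x)^2 := by
      have hpv := parseval (E := fun (k : Fin m) (x : Fin m) => F x k) (c := h) hFr
      rw [← hpv]
      try exact Finset.sum_congr rfl fun k _ => by rw [hdl k]
    have h2 : ∑ x, (h x)^2 ≤ ∑ i, (gv i l)^2 := norm_sum_le u horth hnorm _
    have h3 : ∑ i, (gv i l)^2 = ∑ c, (G c l)^2 := by
      have hpv := parseval (E := fun (i : Fin n) (c : Fin n) => V c i)
        (c := fun c => G c l) hVr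
      rw [← hpv]
      try exact Finset.sum_congr rfl fun i _ => by rw [hgv]
    have h4 : ∑ c, (G c l)^2 = 1 := by
      have := hGc l l
      rw [if_pos rfl] at this
      rw [← this]
      exact Finset.sum_congr rfl fun c _ => sq (G c l) ▸ rfl
    rw [h1]
    calc ∑ x, (h x)^2 ≤ ∑ i, (gv i l)^2 := h2
      _ = 1 := by rw [h3, h4]
  have hhold : ∑ k, ∑ l, ((a k)^2 * (b l)^2) * (d k l)^2
      ≤ (∑ k, ((a k)^2) ^ p) ^ (1/p) * (∑ l, ((b l)^2) ^ q) ^ (1/q) :=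
    holder_sub _ _ _ (fun k => sq_nonneg _) (fun l => sq_nonneg _)
      (fun k l => sq_nonneg _) hrow hcol hpq
  have hMbound : ∑ yz : Fin m × Fin n, (M yz.1 yz.2)^2
      ≤ (∑ k, ((a k)^2) ^ p) ^ (1/p) * (∑ l, ((b l)^2) ^ q) ^ (1/q) := by
    rw [hsq, Fintype.sum_prod_type]
    refine le_trans (le_of_eq ?_) hhold
    exact Finset.sum_congr rfl fun k _ => Finset.sum_congr rfl fun l _ => by ring
  have hCS := Finset.sum_mul_sq_le_sq_mul_sq Finset.univ
    (fun yz : Fin m × Fin n => M yz.1 yz.2) (fun yz => B yz.1 yz.2)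
  have hBsum : ∑ yz : Fin m × Fin n, (B yz.1 yz.2)^2 = ∑ y, ∑ z, (B y z)^2 := by
    rw [Fintype.sum_prod_type]
  have hSB0 : (0:ℝ) ≤ ∑ yz : Fin m × Fin n, (B yz.1 yz.2)^2 :=
    Finset.sum_nonneg fun _ _ => sq_nonneg _
  have hH0 : (0:ℝ) ≤ (∑ k, ((a k)^2) ^ p) ^ (1/p) * (∑ l, ((b l)^2) ^ q) ^ (1/q) :=
    mul_nonneg (Real.rpow_nonneg (Finset.sum_nonneg
        fun k _ => Real.rpow_nonneg (sq_nonneg _) _) _)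
      (Real.rpow_nonneg (Finset.sum_nonneg fun l _ => Real.rpow_nonneg (sq_nonneg _) _) _)
  calc ∑ y, ∑ z, M y z * B y z
      = ∑ yz : Fin m × Fin n, M yz.1 yz.2 * B yz.1 yz.2 := by
        rw [Fintype.sum_prod_type]
    _ ≤ |∑ yz : Fin m × Fin n, M yz.1 yz.2 * B yz.1 yz.2| := le_abs_self _
    _ = Real.sqrt ((∑ yz : Fin m × Fin n, M yz.1 yz.2 * B yz.1 yz.2)^2) :=
        (Real.sqrt_sq_eq_abs _).symm
    _ ≤ Real.sqrt ((∑ yz : Fin m × Fin n, (M yz.1 yz.2)^2) *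
          ∑ yz : Fin m × Fin n, (B yz.1 yz.2)^2) := Real.sqrt_le_sqrt hCS
    _ ≤ Real.sqrt (((∑ k, ((a k)^2) ^ p) ^ (1/p) * (∑ l, ((b l)^2) ^ q) ^ (1/q)) *
          ∑ yz : Fin m × Fin n, (B yz.1 yz.2)^2) :=
        Real.sqrt_le_sqrt (mul_le_mul_of_nonneg_right hMbound hSB0)
    _ = Real.sqrt ((∑ k, ((a k)^2) ^ p) ^ (1/p) * (∑ l, ((b l)^2) ^ q) ^ (1/q))
        * Real.sqrt (∑ y, ∑ z, (B y z)^2) := by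
        rw [Real.sqrt_mul hH0, hBsum]

/-- Nuclear norm bound via Schatten–Hölder:
`‖A‖_* ≤ (tr L^{1/2})^{1/(2p)} (tr R^{1/2})^{1/(2q)} ‖L^{−1/(4p)} A R^{−1/(4q)}‖_F`. -/
theorem stmt14 {m n : ℕ} (A : Matrix (Fin m) (Fin n) ℝ)
    {L : Matrix (Fin m) (Fin m) ℝ} {R : Matrix (Fin n) (Fin n) ℝ}
    (hL : L.PosDef) (hR : R.PosDef)
    {p q : ℝ} (hp : 0 < p) (hq : 0 < q) (hpq : 1 / p + 1 / q = 1) :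
    nuclearNorm A ≤
      ((mrpow L (1/2)).trace) ^ (1 / (2 * p)) * ((mrpow R (1/2)).trace) ^ (1 / (2 * q)) *
        frobNorm (mrpow L (-(1 / (4 * p))) * A * mrpow R (-(1 / (4 * q)))) := by
  classical
  -- conjugate exponents
  have hp1 : 1 < p := by
    have h2 : 0 < 1/q := by positivity
    have hp' : (1:ℝ)/p < 1 := by linarith
    rw [div_lt_one hp] at hp'
    exact hp'
  have hpq' : p.HolderConjugate q := Real.holderConjugate_iff.mpr ⟨hp1, by
    rw [← one_div, ← one_div]; exact hpq⟩
  -- spectral data for L and R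
  have hLh : L.IsHermitian := hL.isHermitian
  have hRh : R.IsHermitian := hR.isHermitian
  obtain ⟨F, hFdef⟩ : ∃ F : Matrix (Fin m) (Fin m) ℝ,
      F = (Matrix.IsHermitian.eigenvectorUnitary hLh : Matrix (Fin m) (Fin m) ℝ) := ⟨_, rfl⟩
  obtain ⟨lam, hlamdef⟩ : ∃ lam : Fin m → ℝ, lam = hLh.eigenvalues := ⟨_, rfl⟩
  obtain ⟨G, hGdef⟩ : ∃ G : Matrix (Fin n) (Fin n) ℝ,
      G = (Matrix.IsHermitian.eigenvectorUnitary hRh : Matrix (Fin n) (Fin n) ℝ) := ⟨_, rfl⟩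
  obtain ⟨rho, hrhodef⟩ : ∃ rho : Fin n → ℝ, rho = hRh.eigenvalues := ⟨_, rfl⟩
  have hFmem : F ∈ Matrix.unitaryGroup (Fin m) ℝ := by
    rw [hFdef]; exact (Matrix.IsHermitian.eigenvectorUnitary hLh).2
  have hGmem : G ∈ Matrix.unitaryGroup (Fin n) ℝ := by
    rw [hGdef]; exact (Matrix.IsHermitian.eigenvectorUnitary hRh).2
  have hFc := unitary_cols hFmem
  have hFr := unitary_rows hFmem
  have hGc := unitary_cols hGmem
  have hGr := unitary_rows hGmem
  have hlampos : ∀ k, 0 < lam k := by rw [hlamdef]; exact hL.eigenvalues_pos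
  have hrhopos : ∀ l, 0 < rho l := by rw [hrhodef]; exact hR.eigenvalues_pos
  have hXapply : ∀ x y, mrpow L (1/(4*p)) x y
      = ∑ k, lam k ^ (1/(4*p)) * (F x k * F y k) := by
    intro x y; rw [hlamdef, hFdef]; exact mrpow_apply hLh _ x y
  have hYapply : ∀ z c, mrpow R (1/(4*q)) z c
      = ∑ l, rho l ^ (1/(4*q)) * (G z l * G c l) := by
    intro z c; rw [hrhodef, hGdef]; exact mrpow_apply hRh _ z c
  -- spectral data for A
  have hH : (Aᴴ * A).IsHermitian := Matrix.isHermitian_conjTranspose_mul_self A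
  obtain ⟨V, hVdef⟩ : ∃ V : Matrix (Fin n) (Fin n) ℝ,
      V = (Matrix.IsHermitian.eigenvectorUnitary hH : Matrix (Fin n) (Fin n) ℝ) := ⟨_, rfl⟩
  obtain ⟨mu, hmudef⟩ : ∃ mu : Fin n → ℝ, mu = hH.eigenvalues := ⟨_, rfl⟩
  have hVmem : V ∈ Matrix.unitaryGroup (Fin n) ℝ := by
    rw [hVdef]; exact (Matrix.IsHermitian.eigenvectorUnitary hH).2
  have hVc := unitary_cols hVmem
  have hVr := unitary_rows hVmem
  have hmu0 : ∀ i, 0 ≤ mu i := by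
    rw [hmudef]; exact Matrix.eigenvalues_conjTranspose_mul_self_nonneg A
  obtain ⟨sig, hsigdef⟩ : ∃ sig : Fin n → ℝ, sig = fun i => Real.sqrt (mu i) := ⟨_, rfl⟩
  have hsig0 : ∀ i, 0 ≤ sig i := by rw [hsigdef]; intro i; exact Real.sqrt_nonneg _
  have hsigsq : ∀ i, sig i ^ 2 = mu i := by
    rw [hsigdef]; intro i; exact Real.sq_sqrt (hmu0 i)
  have hnn : nuclearNorm A = ∑ i, sig i := by
    rw [nuclearNorm, hsigdef, hmudef]; rfl
  -- spectral theorem for AᴴA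
  have hspec : Aᴴ * A = V * Matrix.diagonal mu * star V := by
    rw [hVdef, hmudef]
    have := hH.spectral_theorem
    simpa [RCLike.ofReal_real_eq_id, Function.id_comp] using this
  have hAAV : ∀ bb j, (∑ c, (Aᴴ * A) bb c * V c j) = mu j * V bb j := by
    have hVstar : star V * V = 1 := Matrix.mem_unitaryGroup_iff'.mp hVmem
    have hmm : (Aᴴ * A) * V = V * Matrix.diagonal mu := by
      rw [hspec, Matrix.mul_assoc, hVstar, Matrix.mul_one]
    intro bb j
    have hentry := congrFun (congrFun hmm bb) j
    rw [Matrix.mul_apply, Matrix.mul_diagonal] at hentry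
    rw [hentry]; ring
  have hAA : ∀ bb c, (∑ x, A x bb * A x c) = (Aᴴ * A) bb c := by
    intro bb c
    rw [Matrix.mul_apply]
    exact Finset.sum_congr rfl fun x _ => by
      rw [Matrix.conjTranspose_apply, star_trivial]
  -- the left singular system
  obtain ⟨w, hwdef⟩ : ∃ w : Fin n → Fin m → ℝ,
      w = fun i x => ∑ bb, A x bb * V bb i := ⟨_, rfl⟩
  have hww : ∀ i j, (∑ x, w i x * w j x) = if i = j then mu i else 0 := by
    intro i j
    simp only [hwdef]
    calc ∑ x, (∑ bb, A x bb * V bb i) * (∑ c, A x c * V c j)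
        = ∑ x, ∑ bb, ∑ c, (V bb i * V c j) * (A x bb * A x c) := by
          refine Finset.sum_congr rfl fun x _ => ?_
          rw [Finset.sum_mul_sum]
          exact Finset.sum_congr rfl fun bb _ => Finset.sum_congr rfl fun c _ => by ring
      _ = ∑ bb, ∑ c, (V bb i * V c j) * (∑ x, A x bb * A x c) := by
          rw [Finset.sum_comm]
          refine Finset.sum_congr rfl fun bb _ => ?_
          rw [Finset.sum_comm]
          exact Finset.sum_congr rfl fun c _ => (Finset.mul_sum _ _ _).symm
      _ = ∑ bb, V bb i * (∑ c, (Aᴴ * A) bb c * V c j) := by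
          refine Finset.sum_congr rfl fun bb _ => ?_
          rw [Finset.mul_sum]
          exact Finset.sum_congr rfl fun c _ => by rw [hAA bb c]; ring
      _ = ∑ bb, V bb i * (mu j * V bb j) := by
          exact Finset.sum_congr rfl fun bb _ => by rw [hAAV bb j]
      _ = mu j * ∑ bb, V bb i * V bb j := by
          rw [Finset.mul_sum]
          exact Finset.sum_congr rfl fun bb _ => by ring
      _ = if i = j then mu i else 0 := by
          rw [hVc i j]
          by_cases hcase : i = j
          · rw [if_pos hcase, if_pos hcase, mul_one, hcase]
          · rw [if_neg hcase, if_neg hcase, mul_zero]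
  obtain ⟨u, hudef⟩ : ∃ u : Fin n → Fin m → ℝ,
      u = fun i x => (sig i)⁻¹ * w i x := ⟨_, rfl⟩
  have huu : ∀ i j, (∑ x, u i x * u j x)
      = ((sig i)⁻¹ * (sig j)⁻¹) * (if i = j then mu i else 0) := by
    intro i j
    simp only [hudef]
    rw [← hww i j, Finset.mul_sum]
    exact Finset.sum_congr rfl fun x _ => by ring
  have horth : ∀ i j, i ≠ j → (∑ x, u i x * u j x) = 0 := by
    intro i j hij
    rw [huu i j, if_neg hij, mul_zero]
  have hnorm : ∀ i, (∑ x, u i x * u i x) ≤ 1 := by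
    intro i
    rw [huu i i, if_pos rfl, ← hsigsq i]
    by_cases hcase : sig i = 0
    · rw [hcase]; norm_num
    · have : (sig i)⁻¹ * (sig i)⁻¹ * (sig i)^2 = 1 := by
        field_simp [sq]
      rw [this]
  have hsrep : ∀ i, sig i = ∑ x, u i x * w i x := by
    intro i
    have hstep : ∑ x, u i x * w i x = (sig i)⁻¹ * ∑ x, w i x * w i x := by
      simp only [hudef]
      rw [Finset.mul_sum]
      exact Finset.sum_congr rfl fun x _ => by ring
    rw [hstep, hww i i, if_pos rfl, ← hsigsq i]
    by_cases hcase : sig i = 0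
    · rw [hcase]; norm_num
    · field_simp [sq]
  -- factorization A = X * Bm * Y
  have hXL : mrpow L (1/(4*p)) * mrpow L (-(1/(4*p))) = 1 := by
    rw [mrpow_mul_mrpow hL, add_neg_cancel]
    exact mrpow_zero hLh
  have hRY : mrpow R (-(1/(4*q))) * mrpow R (1/(4*q)) = 1 := by
    rw [mrpow_mul_mrpow hR, neg_add_cancel]
    exact mrpow_zero hRh
  have hXBY : mrpow L (1/(4*p)) * (mrpow L (-(1/(4*p))) * A * mrpow R (-(1/(4*q)))) *
      mrpow R (1/(4*q)) = A := by
    calc mrpow L (1/(4*p)) * (mrpow L (-(1/(4*p))) * A * mrpow R (-(1/(4*q)))) *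
        mrpow R (1/(4*q))
        = (mrpow L (1/(4*p)) * mrpow L (-(1/(4*p)))) * (A *
          (mrpow R (-(1/(4*q))) * mrpow R (1/(4*q)))) := by
          simp only [Matrix.mul_assoc]
      _ = A := by rw [hXL, hRY, Matrix.one_mul, Matrix.mul_one]
  obtain ⟨Bm, hBmdef⟩ : ∃ Bm : Matrix (Fin m) (Fin n) ℝ,
      Bm = mrpow L (-(1/(4*p))) * A * mrpow R (-(1/(4*q))) := ⟨_, rfl⟩
  obtain ⟨a, hadef⟩ : ∃ a : Fin m → ℝ, a = fun k => lam k ^ (1/(4*p)) := ⟨_, rfl⟩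
  obtain ⟨b, hbdef⟩ : ∃ b : Fin n → ℝ, b = fun l => rho l ^ (1/(4*q)) := ⟨_, rfl⟩
  obtain ⟨fu, hfudef⟩ : ∃ fu : Fin n → Fin m → ℝ,
      fu = fun i k => ∑ x, F x k * u i x := ⟨_, rfl⟩
  obtain ⟨gv, hgvdef⟩ : ∃ gv : Fin n → Fin n → ℝ,
      gv = fun i l => ∑ c, G c l * V c i := ⟨_, rfl⟩
  obtain ⟨M, hMdef⟩ : ∃ M : Fin m → Fin n → ℝ,
      M = fun y z => ∑ i, (∑ k, (a k * fu i k) * F y k) *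
        (∑ l, (b l * gv i l) * G z l) := ⟨_, rfl⟩
  have hxu : ∀ i y, (∑ x, u i x * mrpow L (1/(4*p)) x y)
      = ∑ k, (a k * fu i k) * F y k := by
    intro i y
    calc ∑ x, u i x * mrpow L (1/(4*p)) x y
        = ∑ x, ∑ k, (a k * (F x k * u i x)) * F y k := by
          refine Finset.sum_congr rfl fun x _ => ?_
          rw [hXapply x y, Finset.mul_sum]
          refine Finset.sum_congr rfl fun k _ => ?_
          simp only [hadef]
          ring
      _ = ∑ k, (a k * (∑ x, F x k * u i x)) * F y k := by
          rw [Finset.sum_comm]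
          refine Finset.sum_congr rfl fun k _ => ?_
          rw [Finset.mul_sum, Finset.sum_mul]
          try exact Finset.sum_congr rfl fun x _ => by ring
      _ = ∑ k, (a k * fu i k) * F y k := by simp only [hfudef]
  have hyv : ∀ i z, (∑ c, mrpow R (1/(4*q)) z c * V c i)
      = ∑ l, (b l * gv i l) * G z l := by
    intro i z
    calc ∑ c, mrpow R (1/(4*q)) z c * V c i
        = ∑ c, ∑ l, (b l * (G c l * V c i)) * G z l := by
          refine Finset.sum_congr rfl fun c _ => ?_
          rw [hYapply z c, Finset.sum_mul]
          refine Finset.sum_congr rfl fun l _ => ?_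
          simp only [hbdef]
          ring
      _ = ∑ l, (b l * (∑ c, G c l * V c i)) * G z l := by
          rw [Finset.sum_comm]
          refine Finset.sum_congr rfl fun l _ => ?_
          rw [Finset.mul_sum, Finset.sum_mul]
          try exact Finset.sum_congr rfl fun c _ => by ring
      _ = ∑ l, (b l * gv i l) * G z l := by simp only [hgvdef]
  -- representation of each singular value
  have hsig_rep : ∀ i, sig i = ∑ y, (∑ k, (a k * fu i k) * F y k) *
      (∑ z, Bm y z * (∑ l, (b l * gv i l) * G z l)) := by
    intro i
    have e1 : sig i = u i ⬝ᵥ (A *ᵥ fun c => V c i) := by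
      rw [hsrep i]
      refine Finset.sum_congr rfl fun x _ => ?_
      simp only [hwdef, Matrix.mulVec, dotProduct]
    calc sig i
        = u i ⬝ᵥ ((mrpow L (1/(4*p)) * Bm * mrpow R (1/(4*q))) *ᵥ fun c => V c i) := by
          rw [hBmdef, hXBY]; exact e1
      _ = (u i ᵥ* mrpow L (1/(4*p))) ⬝ᵥ
          (Bm *ᵥ (mrpow R (1/(4*q)) *ᵥ fun c => V c i)) := by
          rw [← Matrix.mulVec_mulVec, ← Matrix.mulVec_mulVec, Matrix.dotProduct_mulVec]
      _ = ∑ y, (∑ x, u i x * mrpow L (1/(4*p)) x y) *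
          (∑ z, Bm y z * (∑ c, mrpow R (1/(4*q)) z c * V c i)) := by
          simp only [dotProduct, Matrix.vecMul, Matrix.mulVec]
      _ = ∑ y, (∑ k, (a k * fu i k) * F y k) *
          (∑ z, Bm y z * (∑ l, (b l * gv i l) * G z l)) := by
          refine Finset.sum_congr rfl fun y _ => ?_
          rw [hxu i y]
          congr 1
          refine Finset.sum_congr rfl fun z _ => ?_
          rw [hyv i z]
  -- nuclear norm as a Frobenius pairing
  have hrep2 : nuclearNorm A = ∑ y, ∑ z, M y z * Bm y z := by
    rw [hnn]
    calc ∑ i, sig i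
        = ∑ i, ∑ y, ∑ z, ((∑ k, (a k * fu i k) * F y k) *
            (∑ l, (b l * gv i l) * G z l)) * Bm y z := by
          refine Finset.sum_congr rfl fun i _ => ?_
          rw [hsig_rep i]
          refine Finset.sum_congr rfl fun y _ => ?_
          rw [Finset.mul_sum]
          exact Finset.sum_congr rfl fun z _ => by ring
      _ = ∑ y, ∑ z, ∑ i, ((∑ k, (a k * fu i k) * F y k) *
            (∑ l, (b l * gv i l) * G z l)) * Bm y z := by
          rw [Finset.sum_comm]
          exact Finset.sum_congr rfl fun y _ => Finset.sum_comm
      _ = ∑ y, ∑ z, M y z * Bm y z := by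
          refine Finset.sum_congr rfl fun y _ => Finset.sum_congr rfl fun z _ => ?_
          simp only [hMdef]
          rw [Finset.sum_mul]
  -- apply the core bound
  have hfu' : ∀ i k, fu i k = ∑ x, F x k * u i x := by intro i k; rw [hfudef]
  have hgv' : ∀ i l, gv i l = ∑ c, G c l * V c i := by intro i l; rw [hgvdef]
  have hM' : ∀ y z, M y z = ∑ i, (∑ k, (a k * fu i k) * F y k) *
      (∑ l, (b l * gv i l) * G z l) := by intro y z; rw [hMdef]
  have ha0 : ∀ k, 0 ≤ a k := by
    intro k; simp only [hadef]; exact Real.rpow_nonneg (hlampos k).le _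
  have hb0 : ∀ l, 0 ≤ b l := by
    intro l; simp only [hbdef]; exact Real.rpow_nonneg (hrhopos l).le _
  have hpne : p ≠ 0 := ne_of_gt hp
  have hqne : q ≠ 0 := ne_of_gt hq
  have hcore := core_bound u F V G Bm a b fu gv M hfu' hgv' hM' hFc hFr hGc hGr hVc hVr
    horth hnorm ha0 hb0 hpq'
  -- identify the traces
  have hTL : ∑ k, ((a k)^2) ^ p = (mrpow L (1/2)).trace := by
    rw [mrpow_trace hLh, ← hlamdef]
    refine Finset.sum_congr rfl fun k _ => ?_
    simp only [hadef]
    rw [← Real.rpow_natCast (lam k ^ (1/(4*p))) 2, ← Real.rpow_mul (hlampos k).le,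
        ← Real.rpow_mul (hlampos k).le]
    congr 1
    push_cast
    field_simp
    ring
  have hTR : ∑ l, ((b l)^2) ^ q = (mrpow R (1/2)).trace := by
    rw [mrpow_trace hRh, ← hrhodef]
    refine Finset.sum_congr rfl fun l _ => ?_
    simp only [hbdef]
    rw [← Real.rpow_natCast (rho l ^ (1/(4*q))) 2, ← Real.rpow_mul (hrhopos l).le,
        ← Real.rpow_mul (hrhopos l).le]
    congr 1
    push_cast
    field_simp
    ring
  have hTL0 : 0 ≤ (mrpow L (1/2)).trace := by
    rw [mrpow_trace hLh]
    exact Finset.sum_nonneg fun k _ => Real.rpow_nonneg (hL.eigenvalues_pos k).le _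
  have hTR0 : 0 ≤ (mrpow R (1/2)).trace := by
    rw [mrpow_trace hRh]
    exact Finset.sum_nonneg fun l _ => Real.rpow_nonneg (hR.eigenvalues_pos l).le _
  have hsqrtsplit : Real.sqrt ((mrpow L (1/2)).trace ^ ((1:ℝ)/p) *
      (mrpow R (1/2)).trace ^ ((1:ℝ)/q))
      = ((mrpow L (1/2)).trace) ^ (1/(2*p)) * ((mrpow R (1/2)).trace) ^ (1/(2*q)) := by
    rw [Real.sqrt_mul (Real.rpow_nonneg hTL0 _), Real.sqrt_eq_rpow, Real.sqrt_eq_rpow,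
        ← Real.rpow_mul hTL0, ← Real.rpow_mul hTR0]
    have e1 : (1:ℝ)/p * (1/2) = 1/(2*p) := by ring
    have e2 : (1:ℝ)/q * (1/2) = 1/(2*q) := by ring
    rw [e1, e2]
  have hfrob : frobNorm (mrpow L (-(1 / (4 * p))) * A * mrpow R (-(1 / (4 * q))))
      = Real.sqrt (∑ y, ∑ z, (Bm y z)^2) := by
    rw [← hBmdef]
    have htr : (Bmᴴ * Bm).trace = ∑ y, ∑ z, (Bm y z)^2 := by
      rw [Matrix.trace]
      simp only [Matrix.diag_apply, Matrix.mul_apply, Matrix.conjTranspose_apply,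
        star_trivial]
      rw [Finset.sum_comm]
      exact Finset.sum_congr rfl fun y _ => Finset.sum_congr rfl fun z _ =>
        (pow_two (Bm y z)).symm
    rw [show frobNorm Bm = Real.sqrt ((Bmᴴ * Bm).trace) from rfl, htr]
  calc nuclearNorm A
      = ∑ y, ∑ z, M y z * Bm y z := hrep2
    _ ≤ Real.sqrt ((∑ k, ((a k)^2) ^ p) ^ (1/p) * (∑ l, ((b l)^2) ^ q) ^ (1/q))
        * Real.sqrt (∑ y, ∑ z, (Bm y z)^2) := hcore
    _ = ((mrpow L (1/2)).trace) ^ (1 / (2 * p)) * ((mrpow R (1/2)).trace) ^ (1 / (2 * q)) *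
        frobNorm (mrpow L (-(1 / (4 * p))) * A * mrpow R (-(1 / (4 * q)))) := by
        rw [hTL, hTR, hsqrtsplit, hfrob]

end Paper
end
end
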